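/- Assume f attains its minimum on ℝⁿ. Let ρ > 0, σ > 0, κ ∈ (0,1), let L > 0 satisfy D_f(a,b) ≤ L · D_ψ(a,b) for all a, b ∈ ℝⁿ, and let γ > 0 satisfy γ·L ≤ 1 − κ and γ·σ ≤ 1. Assume D_f(x̄,x) ≥ σ · D_ψ(x̄,x) for all x in the closed ball B(x̄,ρ). Let Θ ≥ 1 and r > 0 satisfy D_ψ(x̄,u) ≤ (Θ/2)‖x̄ − u‖² for all u ∈ B(x̄,r), and r²Θ + 2‖ε‖²/(mσ) ≤ ρ². Let (x_k)_{k∈ℕ} be a sequence with x_0 ∈ B(x̄,r) and (‖x_{k+1}‖² + 1)x_{k+1} = (‖x_k‖² + 1)x_k − γ·∇f(x_k) for all k. Then for every k ∈ ℕ: x_k ∈ B(x̄,ρ) and D_ψ(x̄,x_k) ≤ (1 − γσ)^k · D_ψ(x̄,x_0) + (‖ε‖²/(mσ))·(1 − (1 − γσ)^k). -/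

import Mathlib

/-!
The Bregman three-point identity turns one mirror-descent step into
`D_ψ(x̄, x_{k+1}) = D_ψ(x̄, x_k) - D_ψ(x_{k+1}, x_k) + γ⟪∇f(x_k), x̄ - x_{k+1}⟫`, and the inner
product equals `f(x̄) - f(x_{k+1}) - D_f(x̄, x_k) + D_f(x_{k+1}, x_k)`. Relative smoothness with
`γL ≤ 1` absorbs `D_f(x_{k+1}, x_k)`, and relative strong convexity at `x_k` then gives
`D_ψ(x̄, x_{k+1}) ≤ (1 - γσ) D_ψ(x̄, x_k) + γ (f(x̄) - f(x_{k+1}))`. As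
`f = (1/4m) Σ_r (⟪a_r, x⟫² - ⟪a_r, x̄⟫² - ε_r)² ≥ 0` and `f(x̄) = ‖ε‖²/(4m)`, the noise costs at most
`γ‖ε‖²/m` per step. The unrolled bound never exceeds `r²Θ/2 + ‖ε‖²/(mσ) ≤ ρ²/2`, and
`D_ψ(x̄, ·) ≥ ½‖x̄ - ·‖²` keeps every iterate in `B(x̄, ρ)`, where strong convexity is available
for the next step.
-/

open scoped RealInnerProductSpace BigOperators

noncomputable def phaseObj (m n : ℕ) (a : Fin m → EuclideanSpace ℝ (Fin n))
    (xbar : EuclideanSpace ℝ (Fin n)) (ε : Fin m → ℝ)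
    (x : EuclideanSpace ℝ (Fin n)) : ℝ :=
  (1 / (4 * (m : ℝ))) * ∑ r, (⟪a r, x⟫ ^ 2 - ⟪a r, xbar⟫ ^ 2) ^ 2
    - (1 / (2 * (m : ℝ))) * ∑ r, ε r * (⟪a r, x⟫ ^ 2 - ⟪a r, xbar⟫ ^ 2)
    + (∑ r, ε r ^ 2) / (4 * (m : ℝ))

noncomputable def phaseGrad (m n : ℕ) (a : Fin m → EuclideanSpace ℝ (Fin n))
    (xbar : EuclideanSpace ℝ (Fin n)) (ε : Fin m → ℝ)
    (x : EuclideanSpace ℝ (Fin n)) : EuclideanSpace ℝ (Fin n) :=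
  (1 / (m : ℝ)) • ∑ r, ((⟪a r, x⟫ ^ 2 - ⟪a r, xbar⟫ ^ 2 - ε r) * ⟪a r, x⟫) • a r

noncomputable def entropy (n : ℕ) (x : EuclideanSpace ℝ (Fin n)) : ℝ :=
  (1 / 4) * ‖x‖ ^ 4 + (1 / 2) * ‖x‖ ^ 2

noncomputable def entropyGrad (n : ℕ) (x : EuclideanSpace ℝ (Fin n)) :
    EuclideanSpace ℝ (Fin n) :=
  (‖x‖ ^ 2 + 1) • x

/-- Bregman divergence of the noisy phase-retrieval objective `f`. -/
noncomputable def Df (m n : ℕ) (a : Fin m → EuclideanSpace ℝ (Fin n))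
    (xbar : EuclideanSpace ℝ (Fin n)) (ε : Fin m → ℝ)
    (x z : EuclideanSpace ℝ (Fin n)) : ℝ :=
  phaseObj m n a xbar ε x - phaseObj m n a xbar ε z - ⟪phaseGrad m n a xbar ε z, x - z⟫

/-- Bregman divergence of the entropy `ψ`. -/
noncomputable def Dψ (n : ℕ) (x z : EuclideanSpace ℝ (Fin n)) : ℝ :=
  entropy n x - entropy n z - ⟪entropyGrad n z, x - z⟫

section Bregman

variable {E : Type*} [NormedAddCommGroup E] [InnerProductSpace ℝ E]

def bregman (φ : E → ℝ) (φ' : E → E) (x z : E) : ℝ :=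
  φ x - φ z - ⟪φ' z, x - z⟫

theorem bregman_sub_bregman (φ : E → ℝ) (φ' : E → E) (x y z : E) :
    bregman φ φ' x z - bregman φ φ' y z = φ x - φ y - ⟪φ' z, x - y⟫ := by
  simp only [bregman, inner_sub_right]
  ring

theorem bregman_three_point (φ : E → ℝ) (φ' : E → E) (x y z : E) :
    bregman φ φ' x y = bregman φ φ' x z - bregman φ φ' y z + ⟪φ' z - φ' y, x - y⟫ := by
  simp only [bregman, inner_sub_left, inner_sub_right]
  ring

theorem bregman_mirror_step_le {f ψ : E → ℝ} {f' ψ' : E → E} {γ σ L δ : ℝ} {x z z' : E}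
    (hstep : ψ' z' = ψ' z - γ • f' z) (hγ : 0 ≤ γ) (hγL : γ * L ≤ 1)
    (hsmooth : bregman f f' z' z ≤ L * bregman ψ ψ' z' z) (hψ : 0 ≤ bregman ψ ψ' z' z)
    (hsc : σ * bregman ψ ψ' x z ≤ bregman f f' x z) (hgap : f x - f z' ≤ δ) :
    bregman ψ ψ' x z' ≤ (1 - γ * σ) * bregman ψ ψ' x z + γ * δ := by
  have hinner : ⟪f' z, x - z'⟫ = f x - f z' - bregman f f' x z + bregman f f' z' z := by
    linarith [bregman_sub_bregman f f' x z' z]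
  rw [bregman_three_point ψ ψ' x z' z, hstep, sub_sub_cancel, real_inner_smul_left, hinner]
  nlinarith [mul_le_mul_of_nonneg_left hsmooth hγ, mul_le_mul_of_nonneg_left hsc hγ,
    mul_le_mul_of_nonneg_left hgap hγ, mul_le_mul_of_nonneg_right hγL hψ]

end Bregman

theorem le_geometric_of_step {u : ℕ → ℝ} {q c : ℝ} (hq : 0 ≤ q)
    (hstep : ∀ k, u k ≤ q ^ k * u 0 + c * (1 - q ^ k) → u (k + 1) ≤ q * u k + (1 - q) * c) :
    ∀ k, u k ≤ q ^ k * u 0 + c * (1 - q ^ k) := by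
  intro k
  induction k with
  | zero => simp
  | succ k ih =>
    calc u (k + 1) ≤ q * u k + (1 - q) * c := hstep k ih
      _ ≤ q * (q ^ k * u 0 + c * (1 - q ^ k)) + (1 - q) * c := by gcongr
      _ = q ^ (k + 1) * u 0 + c * (1 - q ^ (k + 1)) := by ring

theorem half_sq_norm_sub_le_Dψ (n : ℕ) (p q : EuclideanSpace ℝ (Fin n)) :
    1 / 2 * ‖p - q‖ ^ 2 ≤ Dψ n p q := by
  have hcs : ⟪q, p⟫ ≤ ‖q‖ * ‖p‖ := real_inner_le_norm q p
  have hexpand : ‖p - q‖ ^ 2 = ‖p‖ ^ 2 - 2 * ⟪q, p⟫ + ‖q‖ ^ 2 := by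
    rw [norm_sub_sq_real, real_inner_comm]
  simp only [Dψ, entropy, entropyGrad, real_inner_smul_left, inner_sub_right,
    real_inner_self_eq_norm_sq, hexpand]
  -- the quartic remainder is `‖p‖⁴/4 + 3‖q‖⁴/4 - ‖q‖²⟪q, p⟫ ≥ 0` (Cauchy–Schwarz and AM-GM)
  nlinarith [mul_le_mul_of_nonneg_left hcs (sq_nonneg ‖q‖),
    mul_nonneg (sq_nonneg (‖p‖ - ‖q‖)) (sq_nonneg ‖q‖), sq_nonneg (‖p‖ ^ 2 - ‖q‖ ^ 2),
    norm_nonneg p, norm_nonneg q]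

theorem Dψ_nonneg (n : ℕ) (p q : EuclideanSpace ℝ (Fin n)) : 0 ≤ Dψ n p q :=
  (by positivity : (0 : ℝ) ≤ 1 / 2 * ‖p - q‖ ^ 2).trans (half_sq_norm_sub_le_Dψ n p q)

theorem mem_closedBall_of_Dψ_le {n : ℕ} {xbar y : EuclideanSpace ℝ (Fin n)} {ρ : ℝ}
    (hρ : 0 ≤ ρ) (h : Dψ n xbar y ≤ ρ ^ 2 / 2) : y ∈ Metric.closedBall xbar ρ := by
  rw [mem_closedBall_iff_norm']
  have := half_sq_norm_sub_le_Dψ n xbar y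
  exact pow_le_pow_iff_left₀ (norm_nonneg _) hρ two_ne_zero |>.mp (by linarith)

section PhaseRetrieval

variable {m n : ℕ} (a : Fin m → EuclideanSpace ℝ (Fin n)) (xbar : EuclideanSpace ℝ (Fin n))
  (ε : Fin m → ℝ)

theorem phaseObj_eq_sum_sq (x : EuclideanSpace ℝ (Fin n)) :
    phaseObj m n a xbar ε x = 1 / (4 * m) * ∑ r, (⟪a r, x⟫ ^ 2 - ⟪a r, xbar⟫ ^ 2 - ε r) ^ 2 := by
  simp only [phaseObj, Finset.mul_sum, Finset.sum_div, ← Finset.sum_sub_distrib,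
    ← Finset.sum_add_distrib]
  exact Finset.sum_congr rfl fun r _ => by ring

theorem phaseObj_nonneg (x : EuclideanSpace ℝ (Fin n)) : 0 ≤ phaseObj m n a xbar ε x := by
  rw [phaseObj_eq_sum_sq]
  positivity

theorem phaseObj_self : phaseObj m n a xbar ε xbar = (∑ r, ε r ^ 2) / (4 * m) := by
  simp [phaseObj]

theorem phaseObj_self_sub_le (x : EuclideanSpace ℝ (Fin n)) :
    phaseObj m n a xbar ε xbar - phaseObj m n a xbar ε x ≤ (∑ r, ε r ^ 2) / m := by
  have hε : 0 ≤ ∑ r, ε r ^ 2 := by positivity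
  have : (∑ r, ε r ^ 2) / (4 * m) ≤ (∑ r, ε r ^ 2) / m := by
    rw [div_mul_eq_div_div_swap]
    exact div_le_self (by positivity) (by norm_num)
  linarith [phaseObj_self a xbar ε, phaseObj_nonneg a xbar ε x]

end PhaseRetrieval

theorem stmt4_general (n m : ℕ) (a : Fin m → EuclideanSpace ℝ (Fin n))
    (xbar : EuclideanSpace ℝ (Fin n)) (ε : Fin m → ℝ)
    (ρ σ κ : ℝ) (hρ : 0 < ρ) (hσ : 0 < σ) (hκ0 : 0 < κ)
    (L : ℝ)
    (hL : ∀ p q : EuclideanSpace ℝ (Fin n), Df m n a xbar ε p q ≤ L * Dψ n p q)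
    (γ : ℝ) (hγ : 0 < γ) (hγL : γ * L ≤ 1 - κ) (hγσ : γ * σ ≤ 1)
    (hsc : ∀ x ∈ Metric.closedBall xbar ρ, Df m n a xbar ε xbar x ≥ σ * Dψ n xbar x)
    (Θ r : ℝ) (hΘ : 1 ≤ Θ)
    (hDψΘ : ∀ u ∈ Metric.closedBall xbar r, Dψ n xbar u ≤ (Θ / 2) * ‖xbar - u‖ ^ 2)
    (hrρ : r ^ 2 * Θ + 2 * (∑ i, ε i ^ 2) / (m * σ) ≤ ρ ^ 2)
    (x : ℕ → EuclideanSpace ℝ (Fin n)) (hx0 : x 0 ∈ Metric.closedBall xbar r)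
    (hupdate : ∀ k : ℕ,
      (‖x (k + 1)‖ ^ 2 + 1) • x (k + 1) =
        (‖x k‖ ^ 2 + 1) • x k - γ • phaseGrad m n a xbar ε (x k)) :
    ∀ k : ℕ, x k ∈ Metric.closedBall xbar ρ ∧
      Dψ n xbar (x k) ≤ (1 - γ * σ) ^ k * Dψ n xbar (x 0)
        + ((∑ i, ε i ^ 2) / (m * σ)) * (1 - (1 - γ * σ) ^ k) := by
  set C := (∑ i, ε i ^ 2) / (m * σ)
  have hq : 0 ≤ 1 - γ * σ := by linarith
  have hD0 : Dψ n xbar (x 0) ≤ Θ / 2 * r ^ 2 :=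
    (hDψΘ _ hx0).trans (by gcongr; rwa [← dist_eq_norm, dist_comm])
  have hball : ∀ k, Dψ n xbar (x k) ≤ (1 - γ * σ) ^ k * Dψ n xbar (x 0)
      + C * (1 - (1 - γ * σ) ^ k) → x k ∈ Metric.closedBall xbar ρ := by
    intro k hk
    refine mem_closedBall_of_Dψ_le hρ.le ?_
    have hqk : (1 - γ * σ) ^ k ≤ 1 := pow_le_one₀ hq (by linarith [mul_pos hγ hσ])
    have h2C : 2 * (∑ i, ε i ^ 2) / (m * σ) = 2 * C := mul_div_assoc _ _ _
    have hC : 0 ≤ C := by positivity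
    nlinarith [mul_le_mul_of_nonneg_right hqk (Dψ_nonneg n xbar (x 0)),
      mul_nonneg hC (pow_nonneg hq k)]
  have hrate := le_geometric_of_step (u := fun k => Dψ n xbar (x k)) (c := C) hq fun k hk => by
    have hnoise : γ * ((∑ i, ε i ^ 2) / m) = (1 - (1 - γ * σ)) * C := by
      simp only [C]
      field_simp
      ring
    rw [← hnoise]
    exact bregman_mirror_step_le (f := phaseObj m n a xbar ε) (ψ := entropy n) (hupdate k)
      hγ.le (by linarith) (hL _ _) (Dψ_nonneg _ _ _) (hsc _ (hball k hk))
      (phaseObj_self_sub_le a xbar ε _)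
  exact fun k => ⟨hball k (hrate k), hrate k⟩

/-- local linear convergence of mirror descent with noise. -/
theorem stmt4 (n m : ℕ) (hm : 1 ≤ m) (a : Fin m → EuclideanSpace ℝ (Fin n))
    (xbar : EuclideanSpace ℝ (Fin n)) (ε : Fin m → ℝ)
    (hattain : ∃ xstar : EuclideanSpace ℝ (Fin n),
      ∀ x : EuclideanSpace ℝ (Fin n), phaseObj m n a xbar ε xstar ≤ phaseObj m n a xbar ε x)
    (ρ σ κ : ℝ) (hρ : 0 < ρ) (hσ : 0 < σ) (hκ0 : 0 < κ) (hκ1 : κ < 1)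
    (L : ℝ) (hLpos : 0 < L)
    (hL : ∀ p q : EuclideanSpace ℝ (Fin n), Df m n a xbar ε p q ≤ L * Dψ n p q)
    (γ : ℝ) (hγ : 0 < γ) (hγL : γ * L ≤ 1 - κ) (hγσ : γ * σ ≤ 1)
    (hsc : ∀ x ∈ Metric.closedBall xbar ρ, Df m n a xbar ε xbar x ≥ σ * Dψ n xbar x)
    (Θ r : ℝ) (hΘ : 1 ≤ Θ) (hr : 0 < r)
    (hDψΘ : ∀ u ∈ Metric.closedBall xbar r, Dψ n xbar u ≤ (Θ / 2) * ‖xbar - u‖ ^ 2)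
    (hrρ : r ^ 2 * Θ + 2 * (∑ i, ε i ^ 2) / (m * σ) ≤ ρ ^ 2)
    (x : ℕ → EuclideanSpace ℝ (Fin n)) (hx0 : x 0 ∈ Metric.closedBall xbar r)
    (hupdate : ∀ k : ℕ,
      (‖x (k + 1)‖ ^ 2 + 1) • x (k + 1) =
        (‖x k‖ ^ 2 + 1) • x k - γ • phaseGrad m n a xbar ε (x k)) :
    ∀ k : ℕ, x k ∈ Metric.closedBall xbar ρ ∧
      Dψ n xbar (x k) ≤ (1 - γ * σ) ^ k * Dψ n xbar (x 0)
        + ((∑ i, ε i ^ 2) / (m * σ)) * (1 - (1 - γ * σ) ^ k) :=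
  stmt4_general n m a xbar ε ρ σ κ hρ hσ hκ0 L hL γ hγ hγL hγσ hsc Θ r hΘ hDψΘ hrρ x hx0 hupdate
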